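/- Series expansion of the intra-option policy gradient: under the assumptions of the Intra-Option Policy Gradient Theorem, for every state-option pair (s, ω), ∂Q_Ω^θ(s,ω)/∂θ = ∑_{k=0}^∞ ∑_{s',ω'} P_γ^{(k)}(s', ω' | s, ω) ∑_a (∂π_{ω',θ}(a|s')/∂θ) Q_U^θ(s', ω', a), where the series converges absolutely. -/

import Mathlib

/-!
The Bellman equations say that `q θ = Q_Ω^θ` solves the linear system `(1 - γ T_θ) q = b_θ`,
where `T_θ` is the row-stochastic transition matrix on state-option pairs and
`b_θ = ∑_a π_θ r`. For `|γ| < 1` the matrix `1 - γ T_θ` is strictly diagonally dominant, so by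
Cramer's rule `q` is differentiable in `θ`. Differentiating the Bellman equation gives the
fixed-point equation `∇q = g + γ T ∇q` with `g = ∑_a Q_U ∇π`; unrolling it `n` times leaves
the remainder `(γ T)^n ∇q`, of size `O(|γ|^n)`, so `∇q = ∑_k (γ T)^k g`, the `k`-th term being
bounded by `|γ|^k ∑ ‖g‖`.
-/

open Finset Matrix

section Determinant

variable {𝕜 E X : Type*} [NontriviallyNormedField 𝕜] [NormedAddCommGroup E] [NormedSpace 𝕜 E]
  [Fintype X] [DecidableEq X] {A : E → Matrix X X 𝕜} {θ₀ : E}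

theorem differentiableAt_det (hA : ∀ i j, DifferentiableAt 𝕜 (fun θ => A θ i j) θ₀) :
    DifferentiableAt 𝕜 (fun θ => (A θ).det) θ₀ := by
  simp only [det_apply']
  fun_prop

/-- Cramer's rule makes each coordinate a quotient of two determinants. -/
theorem differentiableAt_apply_of_mulVec_eq {b v : E → X → 𝕜}
    (hAv : ∀ θ, A θ *ᵥ v θ = b θ) (hA : ∀ i j, DifferentiableAt 𝕜 (fun θ => A θ i j) θ₀)
    (hb : ∀ i, DifferentiableAt 𝕜 (fun θ => b θ i) θ₀) (hdet : (A θ₀).det ≠ 0) (i : X) :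
    DifferentiableAt 𝕜 (fun θ => v θ i) θ₀ := by
  have hcramer : ∀ θ, (A θ).det ≠ 0 →
      v θ i = ((A θ).det)⁻¹ * ((A θ).updateCol i (b θ)).det := by
    intro θ hθ
    rw [← cramer_apply, cramer_eq_adjugate_mulVec, ← hAv, mulVec_mulVec, adjugate_mul,
      smul_mulVec, one_mulVec, Pi.smul_apply, smul_eq_mul, inv_mul_cancel_left₀ hθ]
  have hcol : ∀ j k, DifferentiableAt 𝕜 (fun θ => (A θ).updateCol i (b θ) j k) θ₀ := by
    intro j k
    by_cases hk : k = i
    · subst hk; simpa using hb j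
    · simpa [updateCol_ne hk] using hA j k
  refine DifferentiableAt.congr_of_eventuallyEq
    (((differentiableAt_det hA).inv hdet).mul (differentiableAt_det hcol)) ?_
  filter_upwards [(differentiableAt_det hA).continuousAt.eventually_ne hdet] with θ hθ
  exact hcramer θ hθ

end Determinant

section Discounted

variable {X V : Type*} [Fintype X] [NormedAddCommGroup V] [NormedSpace ℝ V]

theorem eq_pow_apply_of_succ {R : Type*} [Semiring R] [DecidableEq X] (M : Matrix X X R)
    {f : ℕ → X → X → R} (h0 : ∀ x y, f 0 x y = if x = y then 1 else 0)
    (hS : ∀ k x y, f (k + 1) x y = ∑ z, M x z * f k z y) (k : ℕ) (x y : X) :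
    f k x y = (M ^ k) x y := by
  induction k generalizing x y with
  | zero => rw [h0, pow_zero, one_apply]
  | succ k ih => simp only [hS, ih, pow_succ', mul_apply]

theorem sum_smul_sum_smul (A B : Matrix X X ℝ) (v : X → V) (x : X) :
    ∑ z, A x z • ∑ w, B z w • v w = ∑ w, (A * B) x w • v w := by
  simp only [mul_apply, smul_sum, smul_smul, sum_smul]
  exact sum_comm

variable [DecidableEq X] {N : Matrix X X ℝ} {γ : ℝ}

theorem det_one_sub_smul_ne_zero (hN : N ∈ rowStochastic ℝ X) (hγ : |γ| < 1) :
    (1 - γ • N).det ≠ 0 := by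
  refine det_ne_zero_of_sum_row_lt_diag fun k => ?_
  have hoff : ∑ j ∈ univ.erase k, ‖(1 - γ • N) k j‖ = |γ| * (1 - N k k) := by
    rw [← sum_row_of_mem_rowStochastic hN k, ← add_sum_erase _ _ (mem_univ k),
      add_sub_cancel_left, mul_sum]
    refine sum_congr rfl fun j hj => ?_
    rw [Matrix.sub_apply, one_apply_ne' (ne_of_mem_erase hj), Matrix.smul_apply, smul_eq_mul,
      zero_sub, norm_neg, Real.norm_eq_abs, abs_mul,
      abs_of_nonneg (nonneg_of_mem_rowStochastic hN)]
  have hdiag : 1 - |γ| * N k k ≤ ‖(1 - γ • N) k k‖ := by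
    rw [Matrix.sub_apply, one_apply_eq, Matrix.smul_apply, smul_eq_mul, Real.norm_eq_abs]
    calc 1 - |γ| * N k k = |1| - |γ * N k k| := by
          rw [abs_one, abs_mul, abs_of_nonneg (nonneg_of_mem_rowStochastic hN)]
      _ ≤ |1 - γ * N k k| := abs_sub_abs_le_abs_sub _ _
  nlinarith [le_one_of_mem_rowStochastic hN (i := k) (j := k), abs_nonneg γ]

theorem norm_sum_smul_le_of_mem_rowStochastic (hN : N ∈ rowStochastic ℝ X) (v : X → V)
    (x : X) : ‖∑ z, N x z • v z‖ ≤ ∑ z, ‖v z‖ := by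
  refine (norm_sum_le _ _).trans (sum_le_sum fun z _ => ?_)
  rw [norm_smul, Real.norm_eq_abs, abs_of_nonneg (nonneg_of_mem_rowStochastic hN)]
  exact mul_le_of_le_one_left (norm_nonneg _) (le_one_of_mem_rowStochastic hN)

theorem norm_sum_pow_smul_le (hN : N ∈ rowStochastic ℝ X) (v : X → V) (k : ℕ) (x : X) :
    ‖∑ z, ((γ • N) ^ k) x z • v z‖ ≤ |γ| ^ k * ∑ z, ‖v z‖ := by
  calc ‖∑ z, ((γ • N) ^ k) x z • v z‖ = ‖γ ^ k • ∑ z, (N ^ k) x z • v z‖ := by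
        simp only [smul_pow, Matrix.smul_apply, smul_sum, smul_smul, smul_eq_mul]
    _ = |γ| ^ k * ‖∑ z, (N ^ k) x z • v z‖ := by rw [norm_smul, norm_pow, Real.norm_eq_abs]
    _ ≤ |γ| ^ k * ∑ z, ‖v z‖ := by
        gcongr; exact norm_sum_smul_le_of_mem_rowStochastic (pow_mem hN k) v x

theorem summable_norm_sum_pow_smul (hN : N ∈ rowStochastic ℝ X) (hγ : |γ| < 1) (v : X → V)
    (x : X) : Summable fun k => ‖∑ z, ((γ • N) ^ k) x z • v z‖ :=
  .of_nonneg_of_le (fun _ => norm_nonneg _) (fun k => norm_sum_pow_smul_le hN v k x)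
    ((summable_geometric_of_lt_one (abs_nonneg γ) hγ).mul_right _)

theorem eq_sum_range_add_of_eq_add_smul (M : Matrix X X ℝ) {g D : X → V}
    (hD : ∀ x, D x = g x + ∑ z, M x z • D z) (n : ℕ) (x : X) :
    D x = ∑ k ∈ range n, ∑ z, (M ^ k) x z • g z + ∑ z, (M ^ n) x z • D z := by
  induction n with
  | zero => simp [one_apply, ite_smul]
  | succ n ih =>
    have hstep : ∑ z, (M ^ n) x z • D z
        = ∑ z, (M ^ n) x z • g z + ∑ z, (M ^ (n + 1)) x z • D z := by
      calc ∑ z, (M ^ n) x z • D z = ∑ z, (M ^ n) x z • (g z + ∑ w, M z w • D w) :=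
            sum_congr rfl fun z _ => by rw [← hD]
        _ = _ := by rw [pow_succ, ← sum_smul_sum_smul, ← sum_add_distrib]; simp only [smul_add]
    rw [ih, hstep, sum_range_succ, add_assoc]

theorem hasSum_sum_pow_smul_of_eq_add [CompleteSpace V] (hN : N ∈ rowStochastic ℝ X)
    (hγ : |γ| < 1) {g D : X → V} (hD : ∀ x, D x = g x + ∑ z, (γ • N) x z • D z) (x : X) :
    HasSum (fun k => ∑ z, ((γ • N) ^ k) x z • g z) (D x) := by
  rw [hasSum_iff_tendsto_nat_of_summable_norm (summable_norm_sum_pow_smul hN hγ g x)]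
  have htail : Filter.Tendsto (fun n => ∑ z, ((γ • N) ^ n) x z • D z) Filter.atTop (nhds 0) :=
    squeeze_zero_norm (fun n => norm_sum_pow_smul_le hN D n x) <| by
      simpa using (tendsto_pow_atTop_nhds_zero_of_lt_one (abs_nonneg γ) hγ).mul_const
        (∑ z, ‖D z‖)
  simpa [eq_sub_of_add_eq (eq_sum_range_add_of_eq_add_smul _ hD _ x).symm] using
    tendsto_const_nhds.sub htail

end Discounted

section Options

variable {S A O : Type*} [DecidableEq O] {P : S → A → S → ℝ} {β : O → S → ℝ} {πΩ : S → O → ℝ}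

/-- For a fixed action `a`, `optionKernel P β πΩ x a` is the law of the next state-option pair;
`γ • optionTransition (π θ) P β πΩ` is the kernel `P_γ^{(1)}`. -/
def optionKernel (P : S → A → S → ℝ) (β : O → S → ℝ) (πΩ : S → O → ℝ)
    (x : S × O) (a : A) (z : S × O) : ℝ :=
  P x.1 a z.1 * ((1 - β x.2 z.1) * (if z.2 = x.2 then 1 else 0) + β x.2 z.1 * πΩ z.1 z.2)

theorem optionKernel_nonneg (hP0 : ∀ s a s', 0 ≤ P s a s') (hβ0 : ∀ ω s, 0 ≤ β ω s)
    (hβ1 : ∀ ω s, β ω s ≤ 1) (hπΩ0 : ∀ s ω, 0 ≤ πΩ s ω) (x : S × O) (a : A) (z : S × O) :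
    0 ≤ optionKernel P β πΩ x a z :=
  mul_nonneg (hP0 _ _ _) <| add_nonneg
    (mul_nonneg (sub_nonneg.2 (hβ1 _ _)) (by split_ifs <;> norm_num))
    (mul_nonneg (hβ0 _ _) (hπΩ0 _ _))

variable [Fintype S] [Fintype O]

theorem sum_optionKernel_mul (f : S × O → ℝ) (x : S × O) (a : A) :
    ∑ z, optionKernel P β πΩ x a z * f z = ∑ s', P x.1 a s' *
      ((1 - β x.2 s') * f (s', x.2) + β x.2 s' * ∑ ω', πΩ s' ω' * f (s', ω')) := by
  simp only [optionKernel, Fintype.sum_prod_type, mul_assoc, ← mul_sum, add_mul, sum_add_distrib,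
    ite_mul, one_mul, zero_mul, mul_ite, mul_zero, sum_ite_eq', mem_univ, if_true]

theorem sum_optionKernel (hP1 : ∀ s a, ∑ s', P s a s' = 1) (hπΩ1 : ∀ s, ∑ ω, πΩ s ω = 1)
    (x : S × O) (a : A) : ∑ z, optionKernel P β πΩ x a z = 1 := by
  simpa [hπΩ1, hP1] using sum_optionKernel_mul (P := P) (β := β) (πΩ := πΩ) (fun _ => 1) x a

variable [Fintype A]

def optionTransition (p : O → S → A → ℝ) (P : S → A → S → ℝ) (β : O → S → ℝ)
    (πΩ : S → O → ℝ) : Matrix (S × O) (S × O) ℝ :=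
  of fun x z => ∑ a, p x.2 x.1 a * optionKernel P β πΩ x a z

theorem optionTransition_mem_rowStochastic [DecidableEq S] {p : O → S → A → ℝ}
    (hp0 : ∀ ω s a, 0 ≤ p ω s a) (hp1 : ∀ ω s, ∑ a, p ω s a = 1)
    (hκ0 : ∀ x a z, 0 ≤ optionKernel P β πΩ x a z)
    (hκ1 : ∀ x a, ∑ z, optionKernel P β πΩ x a z = 1) :
    optionTransition p P β πΩ ∈ rowStochastic ℝ (S × O) := by
  refine mem_rowStochastic_iff_sum.2 ⟨fun x z => sum_nonneg fun a _ => ?_, fun x => ?_⟩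
  · exact mul_nonneg (hp0 _ _ _) (hκ0 _ _ _)
  · simp only [optionTransition, of_apply]
    rw [sum_comm]
    simp [← mul_sum, hκ1, hp1]

theorem sum_optionTransition_smul {V : Type*} [AddCommGroup V] [Module ℝ V]
    (p : O → S → A → ℝ) (v : S × O → V) (x : S × O) :
    ∑ z, optionTransition p P β πΩ x z • v z =
      ∑ a, p x.2 x.1 a • ∑ z, optionKernel P β πΩ x a z • v z := by
  simp only [optionTransition, of_apply, sum_smul, smul_sum, smul_smul]
  exact sum_comm

variable {γ : ℝ} {r : S → A → ℝ}

theorem one_sub_smul_optionTransition_mulVec [DecidableEq S] {p : O → S → A → ℝ}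
    {q : S × O → ℝ} {qu : S × O → A → ℝ} (hq : ∀ x, q x = ∑ a, p x.2 x.1 a * qu x a)
    (hqu : ∀ x a, qu x a = r x.1 a + γ * ∑ z, optionKernel P β πΩ x a z * q z) :
    (1 - γ • optionTransition p P β πΩ) *ᵥ q = fun x => ∑ a, p x.2 x.1 a * r x.1 a := by
  funext x
  have hTq : (optionTransition p P β πΩ *ᵥ q) x =
      ∑ a, p x.2 x.1 a * ∑ z, optionKernel P β πΩ x a z * q z := by
    simpa [mulVec, dotProduct] using sum_optionTransition_smul p q x
  rw [sub_mulVec, one_mulVec, smul_mulVec, Pi.sub_apply, Pi.smul_apply, smul_eq_mul, hTq, hq x,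
    mul_sum]
  simp only [hqu, mul_add, sum_add_distrib, mul_left_comm γ, add_sub_cancel_right]

variable {E : Type*} [NormedAddCommGroup E] [NormedSpace ℝ E] {θ₀ : E}
  {p : E → O → S → A → ℝ} {q : E → S × O → ℝ} {qu : E → S × O → A → ℝ}

theorem fderiv_optionValue (hq : ∀ θ x, q θ x = ∑ a, p θ x.2 x.1 a * qu θ x a)
    (hqu : ∀ θ x a, qu θ x a = r x.1 a + γ * ∑ z, optionKernel P β πΩ x a z * q θ z)
    (hp : ∀ ω s a, DifferentiableAt ℝ (fun θ => p θ ω s a) θ₀)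
    (hqd : ∀ x, DifferentiableAt ℝ (fun θ => q θ x) θ₀) (x : S × O) :
    fderiv ℝ (fun θ => q θ x) θ₀ =
      ∑ a, qu θ₀ x a • fderiv ℝ (fun θ => p θ x.2 x.1 a) θ₀ +
        ∑ z, (γ • optionTransition (p θ₀) P β πΩ) x z • fderiv ℝ (fun θ => q θ z) θ₀ := by
  have hqu' : ∀ a, HasFDerivAt (fun θ => qu θ x a)
      (γ • ∑ z, optionKernel P β πΩ x a z • fderiv ℝ (fun θ => q θ z) θ₀) θ₀ := fun a =>
    funext (hqu · x a) ▸ (((HasFDerivAt.fun_sum fun z _ =>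
      (hqd z).hasFDerivAt.const_mul (optionKernel P β πΩ x a z)).const_mul γ).const_add _)
  have hq' := funext (hq · x) ▸
    HasFDerivAt.fun_sum fun a _ => (hp x.2 x.1 a).hasFDerivAt.mul (hqu' a)
  rw [hq'.fderiv, sum_add_distrib, add_comm]
  simp only [Matrix.smul_apply, smul_assoc, sum_optionTransition_smul, smul_sum, smul_comm γ]

theorem differentiableAt_optionValue [DecidableEq S] (hγ : |γ| < 1)
    (hq : ∀ θ x, q θ x = ∑ a, p θ x.2 x.1 a * qu θ x a)
    (hqu : ∀ θ x a, qu θ x a = r x.1 a + γ * ∑ z, optionKernel P β πΩ x a z * q θ z)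
    (hp : ∀ ω s a, DifferentiableAt ℝ (fun θ => p θ ω s a) θ₀)
    (hT : optionTransition (p θ₀) P β πΩ ∈ rowStochastic ℝ (S × O)) (x : S × O) :
    DifferentiableAt ℝ (fun θ => q θ x) θ₀ := by
  refine differentiableAt_apply_of_mulVec_eq
    (fun θ => one_sub_smul_optionTransition_mulVec (hq θ) (hqu θ)) (fun i j => ?_)
    (fun i => ?_) (det_one_sub_smul_ne_zero hT hγ) x
  · simp only [Matrix.sub_apply, Matrix.smul_apply, optionTransition, of_apply, smul_eq_mul]
    fun_prop
  · fun_prop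

end Options

/-- **Series expansion of the intra-option policy gradient.** Under the assumptions of
the Intra-Option Policy Gradient Theorem, for every state-option pair `(s, ω)`:
`∂Q_Ω(s,ω)/∂θ = ∑_{k=0}^∞ ∑_{s',ω'} P_γ^{(k)}(s',ω'|s,ω) ∑_a ∂π_{ω',θ}(a|s')/∂θ · Q_U(s',ω',a)`,
where the series converges absolutely. -/
theorem intra_option_gradient_series_expansion
    {S A O : Type*} [Fintype S] [Fintype A] [Fintype O]
    [DecidableEq S] [DecidableEq O]
    {d : ℕ} (θ₀ : Fin d → ℝ)
    (P : S → A → S → ℝ) (r : S → A → ℝ) (γ : ℝ)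
    (hP0 : ∀ s a s', 0 ≤ P s a s') (hP1 : ∀ s a, ∑ s', P s a s' = 1)
    (hγ0 : 0 ≤ γ) (hγ1 : γ < 1)
    (π : (Fin d → ℝ) → O → S → A → ℝ)
    (hπ0 : ∀ θ ω s a, 0 ≤ π θ ω s a) (hπ1 : ∀ θ ω s, ∑ a, π θ ω s a = 1)
    (β : O → S → ℝ) (hβ0 : ∀ ω s, 0 ≤ β ω s) (hβ1 : ∀ ω s, β ω s ≤ 1)
    (πΩ : S → O → ℝ) (hπΩ0 : ∀ s ω, 0 ≤ πΩ s ω) (hπΩ1 : ∀ s, ∑ ω, πΩ s ω = 1)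
    (Q : (Fin d → ℝ) → S → O → ℝ) (U : (Fin d → ℝ) → O → S → ℝ)
    (QU : (Fin d → ℝ) → S → O → A → ℝ)
    (hQ : ∀ θ s ω, Q θ s ω = ∑ a, π θ ω s a * QU θ s ω a)
    (hQU : ∀ θ s ω a, QU θ s ω a = r s a + γ * ∑ s', P s a s' * U θ ω s')
    (hU : ∀ θ ω s', U θ ω s' =
      (1 - β ω s') * Q θ s' ω + β ω s' * ∑ ω', πΩ s' ω' * Q θ s' ω')
    -- the k-step discounted augmented transition kernel at `θ₀`
    (Pk : ℕ → (S × O) → (S × O) → ℝ)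
    (hPk0 : ∀ x y, Pk 0 x y = if x = y then 1 else 0)
    (hPkS : ∀ k x y, Pk (k + 1) x y = ∑ z : S × O,
      (∑ a, π θ₀ x.2 x.1 a * (γ * P x.1 a z.1) *
        ((1 - β x.2 z.1) * (if z.2 = x.2 then 1 else 0) + β x.2 z.1 * πΩ z.1 z.2))
        * Pk k z y)
    (hπdiff : ∀ ω s a, Differentiable ℝ (fun θ => π θ ω s a))
    (s : S) (ω : O) :
    Summable (fun k => ‖∑ s', ∑ ω', Pk k (s, ω) (s', ω') •
      ∑ a, QU θ₀ s' ω' a • fderiv ℝ (fun θ => π θ ω' s' a) θ₀‖) ∧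
    fderiv ℝ (fun θ => Q θ s ω) θ₀ =
      ∑' k, ∑ s', ∑ ω', Pk k (s, ω) (s', ω') •
        ∑ a, QU θ₀ s' ω' a • fderiv ℝ (fun θ => π θ ω' s' a) θ₀ := by
  set T := optionTransition (π θ₀) P β πΩ
  have hγ : |γ| < 1 := abs_lt.2 ⟨by linarith, hγ1⟩
  have hT : T ∈ rowStochastic ℝ (S × O) :=
    optionTransition_mem_rowStochastic (hπ0 θ₀) (hπ1 θ₀) (optionKernel_nonneg hP0 hβ0 hβ1 hπΩ0)
      (sum_optionKernel hP1 hπΩ1)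
  have hQ' : ∀ θ (x : S × O), Q θ x.1 x.2 = ∑ a, π θ x.2 x.1 a * QU θ x.1 x.2 a :=
    fun θ x => hQ θ x.1 x.2
  have hQU' : ∀ θ (x : S × O) a, QU θ x.1 x.2 a =
      r x.1 a + γ * ∑ z, optionKernel P β πΩ x a z * Q θ z.1 z.2 := by
    intro θ x a
    rw [hQU, sum_optionKernel_mul]
    simp only [hU]
  have hπ' := fun ω s a => hπdiff ω s a θ₀
  have hrec := fderiv_optionValue hQ' hQU' hπ' (differentiableAt_optionValue hγ hQ' hQU' hπ' hT)
  have hPk : ∀ k x y, Pk k x y = ((γ • T) ^ k) x y := by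
    refine eq_pow_apply_of_succ _ hPk0 fun k x y =>
      (hPkS k x y).trans (sum_congr rfl fun z _ => ?_)
    simp only [T, Matrix.smul_apply, optionTransition, optionKernel, of_apply, smul_eq_mul,
      mul_sum, mul_assoc, mul_left_comm γ]
  simp only [hPk, ← Fintype.sum_prod_type', Prod.mk.eta]
  exact ⟨summable_norm_sum_pow_smul hT hγ _ _,
    (hasSum_sum_pow_smul_of_eq_add hT hγ hrec (s, ω)).tsum_eq.symm⟩
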